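/- arXiv:2512.12532 — 5 statements merged into one kernel-verified Lean document; each statement's English description precedes it below -/
import Mathlib

section
/- Let X and Y be real-valued square-integrable random variables on a probability space. Then E[min(X,Y)] ≥ min(E[X], E[Y]) − sqrt(Var(X − Y)/2). -/
open MeasureTheory ProbabilityTheory

/-- For square-integrable real random variables `X` and `Y` on a probability space,
`E[min(X,Y)] ≥ min(E[X], E[Y]) − sqrt(Var(X − Y)/2)`. -/
theorem expectation_min_ge_min_expectation_sub_sqrt_variance
    {Ω : Type*} [MeasureSpace Ω] [IsProbabilityMeasure (ℙ : Measure Ω)]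
    (X Y : Ω → ℝ) (hX : MemLp X 2) (hY : MemLp Y 2) :
    (∫ ω, min (X ω) (Y ω)) ≥
      min (∫ ω, X ω) (∫ ω, Y ω) - Real.sqrt (variance (X - Y) ℙ / 2) := by
  have hD : MemLp (X - Y) 2 := hX.sub hY
  have hDa : MemLp (fun ω => |X ω - Y ω|) 2 := by
    simpa [Pi.abs_def, Pi.sub_apply] using hD.abs
  have hiX : Integrable X := hX.integrable one_le_two
  have hiY : Integrable Y := hY.integrable one_le_two
  have hiD : Integrable (X - Y) := hD.integrable one_le_two
  have hiDa : Integrable (fun ω => |X ω - Y ω|) := by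
    simpa [Pi.sub_apply] using hiD.abs
  set a := ∫ ω, |X ω - Y ω| with ha
  set m := ∫ ω, (X ω - Y ω) with hm
  set v := variance (X - Y) ℙ with hv
  have hvnn : 0 ≤ v := variance_nonneg _ _
  have hann : 0 ≤ a := integral_nonneg fun ω => abs_nonneg _
  -- Cauchy-Schwarz via nonnegativity of variance of |X - Y|
  have h1 : a ^ 2 ≤ ∫ ω, (X ω - Y ω) ^ 2 := by
    have := variance_nonneg (fun ω => |X ω - Y ω|) ℙ
    rw [variance_eq_sub hDa] at this
    have heq : (∫ ω, ((fun ω => |X ω - Y ω|) ^ 2) ω) = ∫ ω, (X ω - Y ω) ^ 2 := by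
      apply integral_congr_ae
      filter_upwards with ω
      simp [sq_abs]
    have heq2 : (∫ ω, (fun ω => |X ω - Y ω|) ω) = a := rfl
    simp only [heq, heq2] at this
    linarith
  have h2 : v = (∫ ω, (X ω - Y ω) ^ 2) - m ^ 2 := by
    have := variance_eq_sub hD
    simpa [Pi.pow_apply, Pi.sub_apply] using this
  have h3 : a ^ 2 ≤ v + m ^ 2 := by linarith
  -- hence a ≤ sqrt v + |m|
  have h4 : a ≤ Real.sqrt v + |m| := by
    have hs : 0 ≤ Real.sqrt v := Real.sqrt_nonneg _
    nlinarith [Real.sq_sqrt hvnn, abs_nonneg m, sq_abs m]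
  -- sqrt v ≤ 2 * sqrt (v/2)
  have h5 : Real.sqrt v ≤ 2 * Real.sqrt (v / 2) := by
    have : Real.sqrt v ≤ Real.sqrt (4 * (v / 2)) :=
      Real.sqrt_le_sqrt (by linarith)
    calc Real.sqrt v ≤ Real.sqrt (4 * (v / 2)) := this
      _ = 2 * Real.sqrt (v / 2) := by
          rw [Real.sqrt_mul (by norm_num), show (4:ℝ) = 2 ^ 2 by norm_num,
            Real.sqrt_sq (by norm_num : (0:ℝ) ≤ 2)]
  -- compute the integral of min
  have hmin : ∀ p q : ℝ, min p q = (p + q - |p - q|) / 2 := by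
    intro p q
    rcases le_total p q with h | h
    · rw [min_eq_left h, abs_of_nonpos (by linarith)]; ring
    · rw [min_eq_right h, abs_of_nonneg (by linarith)]; ring
  have hInt : (∫ ω, min (X ω) (Y ω)) =
      ((∫ ω, X ω) + (∫ ω, Y ω) - a) / 2 := by
    simp_rw [hmin]
    have hsum : Integrable (fun ω => X ω + Y ω) := hiX.add hiY
    rw [integral_div, integral_sub hsum hiDa, integral_add hiX hiY]
  have hmeq : m = (∫ ω, X ω) - (∫ ω, Y ω) := by
    rw [hm, integral_sub hiX hiY]
  have hminE : min (∫ ω, X ω) (∫ ω, Y ω) =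
      ((∫ ω, X ω) + (∫ ω, Y ω) - |m|) / 2 := by
    rw [hmeq]; exact hmin _ _
  rw [ge_iff_le, hInt, hminE]
  linarith
end

section
/- For every server set S ⊆ [M] and every binary matrix z ∈ {0,1}^{[N]×[M]}, the expected computing efficiency satisfies E[f(S,z)] ≥ Σ_{s∈S} min(κ_s, Σ_{i∈[N]} z_{is}·μ_i) − Σ_{s∈S} sqrt( (1/2)·Var( K_s − Σ_{i∈[N]} z_{is}·W_i ) ). -/
open MeasureTheory ProbabilityTheory

private lemma min_eq_half {a b : ℝ} : min a b = (a + b - |a - b|) / 2 := by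
  rcases le_total a b with h | h
  · rw [min_eq_left h, abs_of_nonpos (by linarith)]; ring
  · rw [min_eq_right h, abs_of_nonneg (by linarith)]; ring

private lemma key_lemma {Ω : Type*} [MeasureSpace Ω] [IsProbabilityMeasure (ℙ : Measure Ω)]
    (X Y : Ω → ℝ) (hX : MemLp X 2) (hY : MemLp Y 2) :
    min (∫ ω, X ω) (∫ ω, Y ω) -
      Real.sqrt ((1 / 2) * variance (fun ω => X ω - Y ω) ℙ) ≤ ∫ ω, min (X ω) (Y ω) := by
  set D : Ω → ℝ := fun ω => X ω - Y ω with hD_def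
  have hD : MemLp D 2 := hX.sub hY
  have hXi : Integrable X := hX.integrable one_le_two
  have hYi : Integrable Y := hY.integrable one_le_two
  have hDi : Integrable D := hD.integrable one_le_two
  set m : ℝ := ∫ ω, D ω with hm_def
  set Y' : Ω → ℝ := fun ω => D ω - m with hY'_def
  have hY' : MemLp Y' 2 := hD.sub (memLp_const m)
  have hY'i : Integrable Y' := hY'.integrable one_le_two
  have hAbsD : Integrable (fun ω => |D ω|) := hDi.abs
  have hAbsY' : Integrable (fun ω => |Y' ω|) := hY'i.abs
  -- Step 1 : ∫|D| ≤ |m| + ∫|Y'|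
  have step1 : (∫ ω, |D ω|) ≤ |m| + ∫ ω, |Y' ω| := by
    have h1 : (∫ ω, |D ω|) ≤ ∫ ω, (|m| + |Y' ω|) := by
      refine integral_mono hAbsD ((integrable_const _).add hAbsY') fun ω => ?_
      have : D ω = m + Y' ω := by simp [hY'_def]
      rw [this]
      exact abs_add_le _ _
    rwa [integral_add (integrable_const _) hAbsY', integral_const, probReal_univ,
      smul_eq_mul, one_mul] at h1
  -- Step 2 : ∫|Y'| ≤ sqrt (Var D)
  have hVarD : variance D ℙ = ∫ ω, Y' ω ^ 2 := by
    rw [variance_eq_integral hD.aemeasurable]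
  have hVarD_nonneg : 0 ≤ variance D ℙ := variance_nonneg _ _
  have step2 : (∫ ω, |Y' ω|) ≤ Real.sqrt (variance D ℙ) := by
    have habs : MemLp (fun ω => |Y' ω|) 2 := by
      have := hY'.norm
      simpa [Real.norm_eq_abs] using this
    have hv := variance_nonneg (fun ω => |Y' ω|) ℙ
    rw [variance_eq_sub habs, sub_nonneg] at hv
    have h2 : (∫ ω, |Y' ω|) ^ 2 ≤ variance D ℙ := by
      rw [hVarD]
      refine le_trans hv (le_of_eq ?_)
      simp [sq_abs]
    exact Real.le_sqrt_of_sq_le h2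
  -- Step 3 : sqrt (Var D) / 2 ≤ sqrt ((1/2) * Var D)
  have step3 : Real.sqrt (variance D ℙ) / 2 ≤ Real.sqrt ((1 / 2) * variance D ℙ) := by
    apply Real.le_sqrt_of_sq_le
    rw [div_pow, Real.sq_sqrt hVarD_nonneg]
    linarith
  -- Express the integrals
  have hIntMin : (∫ ω, min (X ω) (Y ω)) = ((∫ ω, X ω) + (∫ ω, Y ω) - ∫ ω, |D ω|) / 2 := by
    have : (∫ ω, min (X ω) (Y ω)) = ∫ ω, (X ω + Y ω - |D ω|) / 2 := by
      congr 1; ext ω; exact min_eq_half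
    have hadd : Integrable (fun ω => X ω + Y ω) := hXi.add hYi
    rw [this, integral_div, integral_sub hadd hAbsD, integral_add hXi hYi]
  have hm : m = (∫ ω, X ω) - ∫ ω, Y ω := by
    rw [hm_def]; exact integral_sub hXi hYi
  have hMinMean : min (∫ ω, X ω) (∫ ω, Y ω) = ((∫ ω, X ω) + (∫ ω, Y ω) - |m|) / 2 := by
    rw [hm]; exact min_eq_half
  rw [hIntMin, hMinMean]
  linarith

/-- For every server set `S ⊆ [M]` and every binary matrix `z`,
`E[f(S,z)] ≥ Σ_{s∈S} min(κ_s, Σ_i z_{is}·μ_i) − Σ_{s∈S} sqrt((1/2)·Var(K_s − Σ_i z_{is}·W_i))`. -/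
theorem expected_computing_efficiency_lower_bound
    {Ω : Type*} [MeasureSpace Ω] [IsProbabilityMeasure (ℙ : Measure Ω)]
    {N M : Type*} [Fintype N] [Fintype M]
    (W : N → Ω → ℝ) (K : M → Ω → ℝ)
    (hW : ∀ i, MemLp (W i) 2) (hK : ∀ s, MemLp (K s) 2)
    (μ : N → ℝ) (hμ : ∀ i, μ i = ∫ ω, W i ω)
    (κ : M → ℝ) (hκ : ∀ s, κ s = ∫ ω, K s ω)
    (S : Finset M) (z : N → M → ℝ)
    (hz : ∀ i s, z i s = 0 ∨ z i s = 1) :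
    (∫ ω, ∑ s ∈ S, min (K s ω) (∑ i, z i s * W i ω)) ≥
      (∑ s ∈ S, min (κ s) (∑ i, z i s * μ i)) -
        ∑ s ∈ S, Real.sqrt ((1 / 2) *
          variance (fun ω => K s ω - ∑ i, z i s * W i ω) ℙ) := by
  have hL : ∀ s, MemLp (fun ω => ∑ i, z i s * W i ω) 2 (ℙ : Measure Ω) := by
    intro s
    have := memLp_finset_sum' (μ := (ℙ : Measure Ω)) Finset.univ
      (fun i (_ : i ∈ Finset.univ) => (hW i).const_mul (z i s))
    convert this using 1
    ext ω
    simp [Finset.sum_apply]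
  have hMinInt : ∀ s ∈ S, Integrable (fun ω => min (K s ω) (∑ i, z i s * W i ω)) := by
    intro s _
    have := ((hK s).integrable one_le_two).inf ((hL s).integrable one_le_two)
    simpa [Pi.inf_def] using this
  rw [integral_finset_sum S hMinInt, ge_iff_le, ← Finset.sum_sub_distrib]
  refine Finset.sum_le_sum fun s _ => ?_
  have key := key_lemma (K s) (fun ω => ∑ i, z i s * W i ω) (hK s) (hL s)
  have hIL : (∫ ω, ∑ i, z i s * W i ω) = ∑ i, z i s * μ i := by
    rw [integral_finset_sum _ (fun i _ => ((hW i).integrable one_le_two).const_mul _)]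
    exact Finset.sum_congr rfl fun i _ => by rw [integral_const_mul, hμ i]
  rw [hκ s, ← hIL]
  exact key
end

section
/- For every nonempty server set S ⊆ [M], Π(S) ≤ Π_u(S), where Π_u(S) = λ₁·min( μ, Σ_{s∈S} κ_s ) + λ₂·Σ_{i∈[N]} max_{s∈S} c_{is}. -/
open MeasureTheory ProbabilityTheory

/-- For every nonempty server set `S ⊆ [M]`, `Π(S) ≤ Π_u(S)` where
`Π_u(S) = λ₁·min(μ, Σ_{s∈S} κ_s) + λ₂·Σ_{i∈[N]} max_{s∈S} c_{is}`, and `Π(S)` is the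
maximum of `Ω(S,z) = λ₁·E[f(S,z)] + λ₂·g(S,z)` over all valid assignments `z` for `S`. -/
theorem Pi_le_Pi_u
    {Ω' : Type*} [MeasureSpace Ω'] [IsProbabilityMeasure (ℙ : Measure Ω')]
    {N M : Type*} [Fintype N] [Fintype M]
    (W : N → Ω' → ℝ) (K : M → Ω' → ℝ)
    (hW : ∀ i, Integrable (W i)) (hK : ∀ s, Integrable (K s))
    (μi : N → ℝ) (hμi : ∀ i, μi i = ∫ ω, W i ω)
    (μ : ℝ) (hμ : μ = ∑ i, μi i)
    (κ : M → ℝ) (hκ : ∀ s, κ s = ∫ ω, K s ω)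
    (c : N → M → ℝ) (hc : ∀ i s, c i s ∈ Set.Icc (0 : ℝ) 1)
    (lam1 lam2 : ℝ) (hlam1 : 0 ≤ lam1) (hlam2 : 0 ≤ lam2)
    (S : Finset M) (hS : S.Nonempty)
    (P : ℝ)
    (hP : IsGreatest
      { x : ℝ | ∃ z : N → M → ℝ,
          (∀ i s, z i s = 0 ∨ z i s = 1) ∧
          (∀ i, ∑ s ∈ S, z i s = 1) ∧
          (∀ i, ∀ s ∉ S, z i s = 0) ∧
          x = lam1 * (∫ ω, ∑ s ∈ S, min (K s ω) (∑ i, z i s * W i ω)) +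
              lam2 * (∑ s ∈ S, ∑ i, z i s * c i s) } P) :
    P ≤ lam1 * min μ (∑ s ∈ S, κ s) + lam2 * ∑ i, S.sup' hS (fun s => c i s) := by

  obtain ⟨z, hz01, hzsum, hzout, hPeq⟩ := hP.1
  have hz0 : ∀ i s, 0 ≤ z i s := fun i s => by rcases hz01 i s with h | h <;> simp [h]
  -- integrability pieces
  have hint_sum : ∀ s : M, Integrable (fun ω => ∑ i, z i s * W i ω) := fun s =>
    integrable_finset_sum _ (fun i _ => (hW i).const_mul _)
  have hint_min : ∀ s : M, Integrable (fun ω => min (K s ω) (∑ i, z i s * W i ω)) :=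
    fun s => (hK s).inf (hint_sum s)
  have hint_f : Integrable (fun ω => ∑ s ∈ S, min (K s ω) (∑ i, z i s * W i ω)) :=
    integrable_finset_sum _ (fun s _ => hint_min s)
  -- bound on the computing term
  have hA : (∫ ω, ∑ s ∈ S, min (K s ω) (∑ i, z i s * W i ω)) ≤ min μ (∑ s ∈ S, κ s) := by
    refine le_min ?_ ?_
    · have hle : (∫ ω, ∑ s ∈ S, min (K s ω) (∑ i, z i s * W i ω)) ≤
          ∫ ω, ∑ i, W i ω := by
        refine integral_mono hint_f (integrable_finset_sum _ (fun i _ => hW i)) (fun ω => ?_)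
        calc ∑ s ∈ S, min (K s ω) (∑ i, z i s * W i ω)
            ≤ ∑ s ∈ S, ∑ i, z i s * W i ω :=
              Finset.sum_le_sum (fun s _ => min_le_right _ _)
          _ = ∑ i, (∑ s ∈ S, z i s) * W i ω := by
              rw [Finset.sum_comm]
              exact Finset.sum_congr rfl (fun i _ => (Finset.sum_mul _ _ _).symm)
          _ = ∑ i, W i ω := by
              exact Finset.sum_congr rfl (fun i _ => by rw [hzsum i, one_mul])
      calc (∫ ω, ∑ s ∈ S, min (K s ω) (∑ i, z i s * W i ω)) ≤ ∫ ω, ∑ i, W i ω := hle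
        _ = ∑ i, ∫ ω, W i ω := integral_finset_sum _ (fun i _ => hW i)
        _ = μ := by rw [hμ]; exact Finset.sum_congr rfl (fun i _ => (hμi i).symm)
    · have hle : (∫ ω, ∑ s ∈ S, min (K s ω) (∑ i, z i s * W i ω)) ≤
          ∫ ω, ∑ s ∈ S, K s ω := by
        refine integral_mono hint_f (integrable_finset_sum _ (fun s _ => hK s)) (fun ω => ?_)
        exact Finset.sum_le_sum (fun s _ => min_le_left _ _)
      calc (∫ ω, ∑ s ∈ S, min (K s ω) (∑ i, z i s * W i ω)) ≤ ∫ ω, ∑ s ∈ S, K s ω := hle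
        _ = ∑ s ∈ S, ∫ ω, K s ω := integral_finset_sum _ (fun s _ => hK s)
        _ = ∑ s ∈ S, κ s := Finset.sum_congr rfl (fun s _ => (hκ s).symm)
  -- bound on the communication term
  have hB : (∑ s ∈ S, ∑ i, z i s * c i s) ≤ ∑ i, S.sup' hS (fun s => c i s) := by
    rw [Finset.sum_comm]
    refine Finset.sum_le_sum (fun i _ => ?_)
    calc ∑ s ∈ S, z i s * c i s
        ≤ ∑ s ∈ S, z i s * S.sup' hS (fun s => c i s) :=
          Finset.sum_le_sum (fun s hs =>
            mul_le_mul_of_nonneg_left (Finset.le_sup' _ hs) (hz0 i s))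
      _ = (∑ s ∈ S, z i s) * S.sup' hS (fun s => c i s) := (Finset.sum_mul _ _ _).symm
      _ = S.sup' hS (fun s => c i s) := by rw [hzsum i, one_mul]
  rw [hPeq]
  exact add_le_add (mul_le_mul_of_nonneg_left hA hlam1) (mul_le_mul_of_nonneg_left hB hlam2)
end

section
/- Suppose every server capacity is almost surely nonnegative. Then Π is monotone: for every nonempty server set S ⊆ [M] and every server v ∈ [M], Π(S) ≤ Π(S ∪ {v}). -/
open MeasureTheory ProbabilityTheory

/-- If every server capacity is almost surely nonnegative, then `Π` is monotone:
for every nonempty server set `S ⊆ [M]` and every server `v ∈ [M]`,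
`Π(S) ≤ Π(S ∪ {v})`, where `Π(S)` is the maximum of
`Ω(S,z) = λ₁·E[f(S,z)] + λ₂·g(S,z)` over all valid assignments `z` for `S`. -/
theorem Pi_monotone
    {Ω' : Type*} [MeasureSpace Ω'] [IsProbabilityMeasure (ℙ : Measure Ω')]
    {N M : Type*} [Fintype N] [Fintype M] [DecidableEq M]
    (W : N → Ω' → ℝ) (K : M → Ω' → ℝ)
    (hW : ∀ i, Integrable (W i)) (hK : ∀ s, Integrable (K s))
    (hKpos : ∀ s, ∀ᵐ ω ∂(ℙ : Measure Ω'), 0 ≤ K s ω)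
    (c : N → M → ℝ) (hc : ∀ i s, c i s ∈ Set.Icc (0 : ℝ) 1)
    (lam1 lam2 : ℝ) (hlam1 : 0 ≤ lam1) (hlam2 : 0 ≤ lam2)
    (S : Finset M) (hS : S.Nonempty) (v : M)
    (P Q : ℝ)
    (hP : IsGreatest
      { x : ℝ | ∃ z : N → M → ℝ,
          (∀ i s, z i s = 0 ∨ z i s = 1) ∧
          (∀ i, ∑ s ∈ S, z i s = 1) ∧
          (∀ i, ∀ s ∉ S, z i s = 0) ∧
          x = lam1 * (∫ ω, ∑ s ∈ S, min (K s ω) (∑ i, z i s * W i ω)) +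
              lam2 * (∑ s ∈ S, ∑ i, z i s * c i s) } P)
    (hQ : IsGreatest
      { x : ℝ | ∃ z : N → M → ℝ,
          (∀ i s, z i s = 0 ∨ z i s = 1) ∧
          (∀ i, ∑ s ∈ S ∪ {v}, z i s = 1) ∧
          (∀ i, ∀ s ∉ S ∪ {v}, z i s = 0) ∧
          x = lam1 * (∫ ω, ∑ s ∈ S ∪ {v}, min (K s ω) (∑ i, z i s * W i ω)) +
              lam2 * (∑ s ∈ S ∪ {v}, ∑ i, z i s * c i s) } Q) :
    P ≤ Q := by
  apply hQ.2
  obtain ⟨z, h01, hsum, hzero, hx⟩ := hP.1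
  by_cases hv : v ∈ S
  · have hU : S ∪ {v} = S := by
      rw [Finset.union_eq_left]
      simpa using hv
    rw [hU]
    exact ⟨z, h01, hsum, hzero, hx⟩
  · have hdisj : Disjoint S ({v} : Finset M) := by
      simpa using hv
    have hzv : ∀ i, z i v = 0 := fun i => hzero i v hv
    refine ⟨z, h01, ?_, ?_, ?_⟩
    · intro i
      rw [Finset.sum_union hdisj, Finset.sum_singleton, hzv i, add_zero]
      exact hsum i
    · intro i s hs
      exact hzero i s (fun h => hs (Finset.mem_union_left _ h))
    · have hint : (∫ ω, ∑ s ∈ S ∪ {v}, min (K s ω) (∑ i, z i s * W i ω))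
          = ∫ ω, ∑ s ∈ S, min (K s ω) (∑ i, z i s * W i ω) := by
        apply integral_congr_ae
        filter_upwards [hKpos v] with ω hω
        rw [Finset.sum_union hdisj, Finset.sum_singleton]
        simp [hzv, min_eq_right hω]
      have hcomm : (∑ s ∈ S ∪ {v}, ∑ i, z i s * c i s)
          = ∑ s ∈ S, ∑ i, z i s * c i s := by
        rw [Finset.sum_union hdisj, Finset.sum_singleton]
        simp [hzv]
      rw [hint, hcomm]
      exact hx
end

section
/- Let I be a nonempty finite family of sets, let f, f₁, f₂ : I → ℝ be nonnegative functions with f₁(S) ≤ f(S) ≤ f₂(S) for all S ∈ I, and let γ ∈ (0,1]. Suppose U₁, U₂, U^opt ∈ I satisfy: f₁(U₁) ≥ γ·max_{S∈I} f₁(S); f₂(U₂) ≥ γ·max_{S∈I} f₂(S); f(U^opt) = max_{S∈I} f(S); f₂(U₂) > 0; and f(U^opt) > 0. Then max( f(U₁), f(U₂) ) ≥ γ · max( f(U₂)/f₂(U₂), f₁(U^opt)/f(U^opt) ) · f(U^opt). -/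
/-- Sandwich approximation guarantee: if `f₁ ≤ f ≤ f₂` on a nonempty finite family `I`,
`U₁, U₂` are `γ`-approximate maximizers of `f₁, f₂` respectively, and `U^opt` is an exact
maximizer of `f`, then
`max(f(U₁), f(U₂)) ≥ γ · max(f(U₂)/f₂(U₂), f₁(U^opt)/f(U^opt)) · f(U^opt)`. -/
theorem sandwich_approximation {α : Type*}
    (I : Finset (Set α)) (hI : I.Nonempty)
    (f f₁ f₂ : Set α → ℝ)
    (hf : ∀ S ∈ I, 0 ≤ f S) (hf₁ : ∀ S ∈ I, 0 ≤ f₁ S) (hf₂ : ∀ S ∈ I, 0 ≤ f₂ S)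
    (hsand : ∀ S ∈ I, f₁ S ≤ f S ∧ f S ≤ f₂ S)
    (γ : ℝ) (hγ : γ ∈ Set.Ioc (0 : ℝ) 1)
    (U₁ U₂ Uopt : Set α) (hU₁ : U₁ ∈ I) (hU₂ : U₂ ∈ I) (hUopt : Uopt ∈ I)
    (happ₁ : f₁ U₁ ≥ γ * I.sup' hI f₁)
    (happ₂ : f₂ U₂ ≥ γ * I.sup' hI f₂)
    (hopt : f Uopt = I.sup' hI f)
    (hpos₂ : 0 < f₂ U₂) (hpos : 0 < f Uopt) :
    max (f U₁) (f U₂) ≥ γ * max (f U₂ / f₂ U₂) (f₁ Uopt / f Uopt) * f Uopt := by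
  obtain ⟨hγ0, hγ1⟩ := hγ
  have hfU₂ : 0 ≤ f U₂ := hf U₂ hU₂
  -- key: γ * f Uopt ≤ f₂ U₂
  have hkey : γ * f Uopt ≤ f₂ U₂ := by
    calc γ * f Uopt ≤ γ * f₂ Uopt := by
          have := (hsand Uopt hUopt).2
          nlinarith
      _ ≤ γ * I.sup' hI f₂ := by
          have := Finset.le_sup' f₂ hUopt
          nlinarith
      _ ≤ f₂ U₂ := happ₂
  rw [ge_iff_le, mul_comm, ← mul_assoc, mul_max_of_nonneg _ _ (le_of_lt (mul_pos hpos hγ0))]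
  apply max_le
  · have : f Uopt * γ * (f U₂ / f₂ U₂) ≤ f U₂ := by
      rw [div_eq_mul_inv]
      have h2 : (f₂ U₂)⁻¹ > 0 := inv_pos.mpr hpos₂
      have : f Uopt * γ * (f U₂ * (f₂ U₂)⁻¹) = (γ * f Uopt) * (f₂ U₂)⁻¹ * f U₂ := by ring
      rw [this]
      have h3 : (γ * f Uopt) * (f₂ U₂)⁻¹ ≤ 1 := by
        rw [← div_eq_mul_inv, div_le_one hpos₂]; exact hkey
      nlinarith
    exact this.trans (le_max_right _ _)
  · have h1 : f Uopt * γ * (f₁ Uopt / f Uopt) = γ * f₁ Uopt := by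
      field_simp
    rw [h1]
    have h2 : γ * f₁ Uopt ≤ f U₁ := by
      calc γ * f₁ Uopt ≤ γ * I.sup' hI f₁ := by
            have := Finset.le_sup' f₁ hUopt; nlinarith
        _ ≤ f₁ U₁ := happ₁
        _ ≤ f U₁ := (hsand U₁ hU₁).1
    exact h2.trans (le_max_left _ _)
end
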